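/- arXiv:0806.4675 — 2 statements merged into one kernel-verified Lean document; each statement's English description precedes it below -/
import Mathlib

section
/- (Theorem 1(a)) Let Y be a square-integrable real random variable, let X(1), …, X(n) be pairwise independent square-integrable real random variables with Var(X(i)) > 0 for each i, and set βᵢ* = −Cov(Y, X(i))/Var(X(i)). Then for all real numbers β₁, …, βₙ, Var(Y + Σᵢ βᵢ*(X(i) − E[X(i)])) ≤ Var(Y + Σᵢ βᵢ(X(i) − E[X(i)])); i.e., among all estimators of the form W = Y + c(V − E[V]) with V = Σᵢ αᵢ X(i), the optimal variance reduction is achieved exactly when cαᵢ = −Cov(Y, X(i))/Var(X(i)) for all i. -/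
open MeasureTheory ProbabilityTheory

/-- Covariance of two real random variables: `Cov(X,Y) = E[(X - E[X]) * (Y - E[Y])]`. -/
noncomputable def cov {Ω : Type*} [MeasurableSpace Ω] (μ : Measure Ω) (X Y : Ω → ℝ) : ℝ :=
  ∫ ω, (X ω - ∫ ω', X ω' ∂μ) * (Y ω - ∫ ω', Y ω' ∂μ) ∂μ

/-- Variance of a real random variable: `Var(X) = Cov(X,X)`. -/
noncomputable def var {Ω : Type*} [MeasurableSpace Ω] (μ : Measure Ω) (X : Ω → ℝ) : ℝ :=
  cov μ X X

lemma integrable_mul_of_memL2 {Ω : Type*} [MeasurableSpace Ω] {μ : Measure Ω}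
    {f g : Ω → ℝ} (hf : MemLp f 2 μ) (hg : MemLp g 2 μ) :
    Integrable (fun ω => f ω * g ω) μ := by
  have h : MemLp (f • g) 1 μ :=
    hg.smul hf (p := 2) (q := 2) (r := 1) (hpqr := ⟨by simp [ENNReal.inv_two_add_inv_two]⟩)
  have h2 : MemLp (fun ω => f ω * g ω) 1 μ := h
  exact memLp_one_iff_integrable.mp h2

lemma var_expand {Ω : Type*} [MeasurableSpace Ω] (μ : Measure Ω) [IsProbabilityMeasure μ]
    {n : ℕ} (Y : Ω → ℝ) (X : Fin n → Ω → ℝ)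
    (hY : MemLp Y 2 μ) (hX : ∀ i, MemLp (X i) 2 μ)
    (hcov0 : ∀ i j, i ≠ j →
      (∫ ω, (X i ω - ∫ ω', X i ω' ∂μ) * (X j ω - ∫ ω', X j ω' ∂μ) ∂μ) = 0)
    (b : Fin n → ℝ) :
    var μ (fun ω => Y ω + ∑ i, b i * (X i ω - ∫ ω', X i ω' ∂μ)) =
      var μ Y + ∑ i, (2 * b i * cov μ Y (X i) + (b i)^2 * var μ (X i)) := by
  set m : Fin n → ℝ := fun i => ∫ ω', X i ω' ∂μ with hm
  set Z : Fin n → Ω → ℝ := fun i ω => X i ω - m i with hZ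
  set U : Ω → ℝ := fun ω => Y ω - ∫ ω', Y ω' ∂μ with hU
  have hrw : (fun ω => Y ω + ∑ i, b i * (X i ω - ∫ ω', X i ω' ∂μ))
      = (fun ω => Y ω + ∑ i, b i * Z i ω) := rfl
  rw [hrw]
  have hZmem : ∀ i, MemLp (Z i) 2 μ := fun i => (hX i).sub (memLp_const _)
  have hUmem : MemLp U 2 μ := hY.sub (memLp_const _)
  have hZint : ∀ i, Integrable (Z i) μ := fun i => (hZmem i).integrable one_le_two
  have hYint : Integrable Y μ := hY.integrable one_le_two
  have hZ0 : ∀ i, (∫ ω, Z i ω ∂μ) = 0 := by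
    intro i
    have h : (∫ ω, Z i ω ∂μ) = (∫ ω, X i ω ∂μ) - (∫ _ω, m i ∂μ) :=
      integral_sub ((hX i).integrable one_le_two) (integrable_const _)
    simp only [integral_const, measure_univ, ENNReal.toReal_one, one_smul, smul_eq_mul] at h
    rw [h]; simp [hm]
  have hmean : (∫ ω, (Y ω + ∑ i, b i * Z i ω) ∂μ) = ∫ ω', Y ω' ∂μ := by
    rw [integral_add hYint (integrable_finset_sum _ (fun i _ => (hZint i).const_mul _)),
      integral_finset_sum _ (fun i _ => (hZint i).const_mul _)]
    simp [integral_const_mul, hZ0]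
  have hiUU : Integrable (fun ω => U ω * U ω) μ := integrable_mul_of_memL2 hUmem hUmem
  have hiUZ : ∀ i, Integrable (fun ω => U ω * Z i ω) μ :=
    fun i => integrable_mul_of_memL2 hUmem (hZmem i)
  have hiZZ : ∀ i j, Integrable (fun ω => Z i ω * Z j ω) μ :=
    fun i j => integrable_mul_of_memL2 (hZmem i) (hZmem j)
  have hpt : ∀ ω, (Y ω + ∑ i, b i * Z i ω - ∫ ω', Y ω' ∂μ) *
      (Y ω + ∑ i, b i * Z i ω - ∫ ω', Y ω' ∂μ)
      = U ω * U ω + ((∑ i, 2 * b i * (U ω * Z i ω))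
        + ∑ i, ∑ j, (b i * b j) * (Z i ω * Z j ω)) := by
    intro ω
    set s := ∑ i, b i * Z i ω with hs
    have h1 : Y ω + ∑ i, b i * Z i ω - ∫ ω', Y ω' ∂μ = U ω + s := by
      rw [hU, hs]; ring
    have hA : (∑ i, 2 * b i * (U ω * Z i ω)) = 2 * U ω * s := by
      rw [hs, Finset.mul_sum]
      exact Finset.sum_congr rfl fun i _ => by ring
    have hB : (∑ i, ∑ j, (b i * b j) * (Z i ω * Z j ω)) = s * s := by
      rw [hs, Finset.sum_mul_sum]
      exact Finset.sum_congr rfl fun i _ => Finset.sum_congr rfl fun j _ => by ring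
    rw [h1, hA, hB]; ring
  have IA : Integrable (fun ω => ∑ i, 2 * b i * (U ω * Z i ω)) μ :=
    integrable_finset_sum _ fun i _ => (hiUZ i).const_mul _
  have IB : Integrable (fun ω => ∑ i, ∑ j, (b i * b j) * (Z i ω * Z j ω)) μ :=
    integrable_finset_sum _ fun i _ => integrable_finset_sum _ fun j _ =>
      (hiZZ i j).const_mul _
  have IAB : Integrable (fun ω => (∑ i, 2 * b i * (U ω * Z i ω))
      + ∑ i, ∑ j, (b i * b j) * (Z i ω * Z j ω)) μ := IA.add IB
  have key : var μ (fun ω => Y ω + ∑ i, b i * Z i ω)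
      = (∫ ω, U ω * U ω ∂μ) + ((∫ ω, ∑ i, 2 * b i * (U ω * Z i ω) ∂μ)
        + ∫ ω, ∑ i, ∑ j, (b i * b j) * (Z i ω * Z j ω) ∂μ) := by
    simp only [var, cov]
    rw [hmean]
    simp_rw [hpt]
    rw [integral_add hiUU IAB, integral_add IA IB]
  rw [key, integral_finset_sum _ fun i _ => (hiUZ i).const_mul _,
    integral_finset_sum _ fun i _ => integrable_finset_sum _ fun j _ =>
      (hiZZ i j).const_mul _]
  have hvarY : (∫ ω, U ω * U ω ∂μ) = var μ Y := rfl
  rw [hvarY]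
  congr 1
  rw [← Finset.sum_add_distrib]
  refine Finset.sum_congr rfl fun i _ => ?_
  have hcovYX : (∫ ω, U ω * Z i ω ∂μ) = cov μ Y (X i) := rfl
  have h1 : ∫ ω, 2 * b i * (U ω * Z i ω) ∂μ = 2 * b i * cov μ Y (X i) := by
    rw [integral_const_mul, hcovYX]
  rw [h1]
  congr 1
  rw [integral_finset_sum _ fun j _ => (hiZZ i j).const_mul _]
  rw [Finset.sum_eq_single i (fun j _ hji => by
      rw [integral_const_mul, hcov0 i j (Ne.symm hji), mul_zero])
    (fun h => absurd (Finset.mem_univ i) h)]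
  have hvarX : (∫ ω, Z i ω * Z i ω ∂μ) = var μ (X i) := rfl
  rw [integral_const_mul, hvarX]; ring

/-- Theorem 1(a): the coefficients `βᵢ* = -Cov(Y,Xᵢ)/Var(Xᵢ)` minimize the
variance of `Y + Σᵢ βᵢ (Xᵢ - E[Xᵢ])`. -/
theorem optimal_linear_coefficients_minimize_variance {Ω : Type*} [MeasurableSpace Ω]
    (μ : Measure Ω) [IsProbabilityMeasure μ] {n : ℕ} (Y : Ω → ℝ) (X : Fin n → Ω → ℝ)
    (hY : MemLp Y 2 μ) (hX : ∀ i, MemLp (X i) 2 μ)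
    (hindep : Pairwise fun i j => IndepFun (X i) (X j) μ)
    (hXpos : ∀ i, 0 < var μ (X i)) (β : Fin n → ℝ) :
    var μ (fun ω => Y ω + ∑ i, (-(cov μ Y (X i) / var μ (X i))) * (X i ω - ∫ ω', X i ω' ∂μ)) ≤
      var μ (fun ω => Y ω + ∑ i, β i * (X i ω - ∫ ω', X i ω' ∂μ)) := by
  have hcov0 : ∀ i j, i ≠ j →
      (∫ ω, (X i ω - ∫ ω', X i ω' ∂μ) * (X j ω - ∫ ω', X j ω' ∂μ) ∂μ) = 0 := by
    intro i j hij
    have hind := hindep hij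
    have hiint : Integrable (X i) μ := (hX i).integrable one_le_two
    have hjint : Integrable (X j) μ := (hX j).integrable one_le_two
    have hmul : (∫ ω, X i ω * X j ω ∂μ) = (∫ ω, X i ω ∂μ) * ∫ ω, X j ω ∂μ :=
      hind.integral_fun_mul_eq_mul_integral hiint.aestronglyMeasurable hjint.aestronglyMeasurable
    set mi := ∫ ω', X i ω' ∂μ
    set mj := ∫ ω', X j ω' ∂μ
    have hpt : ∀ ω, (X i ω - mi) * (X j ω - mj)
        = X i ω * X j ω - mj * X i ω - mi * X j ω + mi * mj := fun ω => by ring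
    have I1 : Integrable (fun ω => X i ω * X j ω) μ := integrable_mul_of_memL2 (hX i) (hX j)
    have I2 : Integrable (fun ω => mj * X i ω) μ := hiint.const_mul mj
    have I3 : Integrable (fun ω => mi * X j ω) μ := hjint.const_mul mi
    have I12 : Integrable (fun ω => X i ω * X j ω - mj * X i ω) μ := I1.sub I2
    have I123 : Integrable (fun ω => X i ω * X j ω - mj * X i ω - mi * X j ω) μ := I12.sub I3
    simp_rw [hpt]
    rw [integral_add I123 (integrable_const _), integral_sub I12 I3, integral_sub I1 I2,
      integral_const_mul, integral_const_mul, hmul]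
    simp only [integral_const, measure_univ, probReal_univ, ENNReal.toReal_one, one_smul, smul_eq_mul]
    ring
  rw [var_expand μ Y X hY hX hcov0, var_expand μ Y X hY hX hcov0]
  gcongr var μ Y + ?_
  refine Finset.sum_le_sum fun i _ => ?_
  set C := cov μ Y (X i)
  set V := var μ (X i)
  have hV : 0 < V := hXpos i
  have heq : 2 * (-(C / V)) * C + (-(C / V))^2 * V = -(C^2 / V) := by
    field_simp; ring
  rw [heq]
  have hdiv : C^2 / V * V = C^2 := div_mul_cancel₀ _ hV.ne'
  nlinarith [sq_nonneg (β i * V + C), hV]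
end

section
/- (Remark 1, converse direction) Let Y be a square-integrable real random variable, let X(1), …, X(n) be pairwise independent square-integrable real random variables with Var(X(i)) > 0 for each i, and suppose Cov(Y, X(j)) ≠ 0 for at least one j. Let α₁, …, αₙ be real numbers with V = Σᵢ αᵢ X(i) satisfying Var(V) > 0. If Cov(Y, V)²/Var(V) = Σᵢ Cov(Y, X(i))²/Var(X(i)), then there exists a nonzero real constant λ such that αᵢ = −λ Cov(Y, X(i))/Var(X(i)) for all i; i.e., a control variate of the form V = Σᵢ αᵢ X(i) gives rise to the optimal variance reduction only if its weights are proportional to −Cov(Y, X(i))/Var(X(i)). -/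
open MeasureTheory ProbabilityTheory

section Aux

variable {Ω : Type*} [MeasurableSpace Ω] {μ : Measure Ω} [IsProbabilityMeasure μ]

lemma aux_integrable_of_memℒp {f : Ω → ℝ} (hf : MemLp f 2 μ) : Integrable f μ :=
  hf.integrable (by norm_num)

lemma aux_memℒp_sub_const {f : Ω → ℝ} (hf : MemLp f 2 μ) (c : ℝ) :
    MemLp (fun ω => f ω - c) 2 μ :=
  hf.sub (memLp_const c)

lemma aux_integrable_mul {f g : Ω → ℝ} (hf : MemLp f 2 μ) (hg : MemLp g 2 μ) :
    Integrable (fun ω => f ω * g ω) μ := by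
  rw [← memLp_one_iff_integrable]
  have h := hg.smul (φ := f) hf (r := 1)
  exact h

lemma aux_integrable_centered_mul {f g : Ω → ℝ} (hf : MemLp f 2 μ) (hg : MemLp g 2 μ)
    (a b : ℝ) : Integrable (fun ω => (f ω - a) * (g ω - b)) μ :=
  aux_integrable_mul (aux_memℒp_sub_const hf a) (aux_memℒp_sub_const hg b)

lemma aux_cov_indep_zero {f g : Ω → ℝ} (hf : MemLp f 2 μ) (hg : MemLp g 2 μ)
    (h : IndepFun f g μ) : cov μ f g = 0 := by
  set a := ∫ ω, f ω ∂μ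
  set b := ∫ ω, g ω ∂μ
  have hind : IndepFun (fun ω => f ω - a) (fun ω => g ω - b) μ :=
    h.comp (measurable_id.sub_const a) (measurable_id.sub_const b)
  have h1 : Integrable (fun ω => f ω - a) μ := (aux_memℒp_sub_const hf a).integrable (by norm_num)
  have h2 : Integrable (fun ω => g ω - b) μ := (aux_memℒp_sub_const hg b).integrable (by norm_num)
  have := hind.integral_fun_mul_eq_mul_integral h1.1 h2.1
  have e1 : ∫ ω, (f ω - a) ∂μ = 0 := by
    rw [integral_sub (aux_integrable_of_memℒp hf) (integrable_const a)]
    simp [a]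
  have e2 : ∫ ω, (g ω - b) ∂μ = 0 := by
    rw [integral_sub (aux_integrable_of_memℒp hg) (integrable_const b)]
    simp [b]
  simpa [cov, e1, e2] using this

lemma aux_integral_sum {n : ℕ} (X : Fin n → Ω → ℝ) (hX : ∀ i, MemLp (X i) 2 μ)
    (α : Fin n → ℝ) :
    ∫ ω, (∑ i, α i * X i ω) ∂μ = ∑ i, α i * ∫ ω, X i ω ∂μ := by
  rw [integral_finset_sum]
  · exact Finset.sum_congr rfl fun i _ => by
      rw [integral_const_mul]
  · exact fun i _ => (aux_integrable_of_memℒp (hX i)).const_mul _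

lemma aux_cov_sum {n : ℕ} (Y : Ω → ℝ) (X : Fin n → Ω → ℝ) (hY : MemLp Y 2 μ)
    (hX : ∀ i, MemLp (X i) 2 μ) (α : Fin n → ℝ) :
    cov μ Y (fun ω => ∑ i, α i * X i ω) = ∑ i, α i * cov μ Y (X i) := by
  have hs := aux_integral_sum X hX α
  unfold cov
  rw [hs]
  have hpt : ∀ ω, (Y ω - ∫ ω', Y ω' ∂μ) * ((∑ i, α i * X i ω) - ∑ i, α i * ∫ ω', X i ω' ∂μ)
      = ∑ i, α i * ((Y ω - ∫ ω', Y ω' ∂μ) * (X i ω - ∫ ω', X i ω' ∂μ)) := by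
    intro ω
    rw [← Finset.sum_sub_distrib, Finset.mul_sum]
    exact Finset.sum_congr rfl fun i _ => by ring
  simp_rw [hpt]
  rw [integral_finset_sum]
  · exact Finset.sum_congr rfl fun i _ => by rw [integral_const_mul]
  · intro i _
    exact ((aux_integrable_centered_mul hY (hX i) _ _).const_mul _)

lemma aux_var_sum {n : ℕ} (X : Fin n → Ω → ℝ) (hX : ∀ i, MemLp (X i) 2 μ)
    (hindep : Pairwise fun i j => IndepFun (X i) (X j) μ) (α : Fin n → ℝ) :
    var μ (fun ω => ∑ i, α i * X i ω) = ∑ i, (α i)^2 * var μ (X i) := by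
  have hs := aux_integral_sum X hX α
  unfold var cov
  rw [hs]
  have hpt : ∀ ω, ((∑ i, α i * X i ω) - ∑ i, α i * ∫ ω', X i ω' ∂μ) *
      ((∑ i, α i * X i ω) - ∑ i, α i * ∫ ω', X i ω' ∂μ)
      = ∑ i, ∑ k, (α i * α k) *
        ((X i ω - ∫ ω', X i ω' ∂μ) * (X k ω - ∫ ω', X k ω' ∂μ)) := by
    intro ω
    rw [← Finset.sum_sub_distrib, Finset.sum_mul_sum]
    exact Finset.sum_congr rfl fun i _ => Finset.sum_congr rfl fun k _ => by ring
  simp_rw [hpt]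
  rw [integral_finset_sum _ (fun i _ => integrable_finset_sum _ (fun k _ =>
    (aux_integrable_centered_mul (hX i) (hX k) _ _).const_mul _))]
  refine Finset.sum_congr rfl fun i _ => ?_
  rw [integral_finset_sum _ (fun k _ =>
    (aux_integrable_centered_mul (hX i) (hX k) _ _).const_mul _)]
  rw [Finset.sum_eq_single i]
  · rw [integral_const_mul, sq]
  · intro k _ hk
    rw [integral_const_mul]
    have : cov μ (X i) (X k) = 0 := aux_cov_indep_zero (hX i) (hX k) (hindep (Ne.symm hk))
    unfold cov at this
    rw [this, mul_zero]
  · intro h; exact absurd (Finset.mem_univ i) h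

end Aux

/-- Remark 1, converse direction: a control variate `V = Σᵢ αᵢ Xᵢ` attains the
optimal variance reduction only if its weights are proportional to `-Cov(Y,Xᵢ)/Var(Xᵢ)`. -/
theorem proportional_weights_of_optimal_reduction {Ω : Type*} [MeasurableSpace Ω]
    (μ : Measure Ω) [IsProbabilityMeasure μ] {n : ℕ} (Y : Ω → ℝ) (X : Fin n → Ω → ℝ)
    (hY : MemLp Y 2 μ) (hX : ∀ i, MemLp (X i) 2 μ)
    (hindep : Pairwise fun i j => IndepFun (X i) (X j) μ)
    (hXpos : ∀ i, 0 < var μ (X i)) (j : Fin n) (hj : cov μ Y (X j) ≠ 0) (α : Fin n → ℝ)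
    (hVpos : 0 < var μ (fun ω => ∑ i, α i * X i ω))
    (hopt : cov μ Y (fun ω => ∑ i, α i * X i ω) ^ 2 / var μ (fun ω => ∑ i, α i * X i ω) =
      ∑ i, cov μ Y (X i) ^ 2 / var μ (X i)) :
    ∃ lam : ℝ, lam ≠ 0 ∧ ∀ i, α i = -lam * (cov μ Y (X i) / var μ (X i)) := by
  set c : Fin n → ℝ := fun i => cov μ Y (X i) with hc
  set v : Fin n → ℝ := fun i => var μ (X i) with hv
  have hcov := aux_cov_sum Y X hY hX α
  have hvar := aux_var_sum X hX hindep α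
  set C : ℝ := ∑ i, α i * c i with hC
  set W : ℝ := ∑ i, (α i)^2 * v i with hW
  set S : ℝ := ∑ i, (c i)^2 / v i with hS
  have hWpos : 0 < W := by rw [← hvar]; exact hVpos
  have hSpos : 0 < S := by
    rw [hS]
    have hjpos : 0 < (c j)^2 / v j := div_pos (by positivity) (hXpos j)
    exact Finset.sum_pos' (fun i _ => div_nonneg (sq_nonneg _) (hXpos i).le)
      ⟨j, Finset.mem_univ j, hjpos⟩
  have hopt' : C^2 = S * W := by
    have : C^2 / W = S := by rw [← hcov, ← hvar]; exact hopt
    field_simp at this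
    linarith [this]
  have hCne : C ≠ 0 := by
    intro h
    rw [h] at hopt'
    nlinarith [mul_pos hSpos hWpos]
  have key : ∑ i, (1 / v i) * (α i * v i * C - c i * W)^2 = 0 := by
    have expand : ∀ i ∈ Finset.univ, (1 / v i) * (α i * v i * C - c i * W)^2
        = C^2 * ((α i)^2 * v i) - 2*C*W*(α i * c i) + W^2 * ((c i)^2 / v i) := by
      intro i _
      have hvne : v i ≠ 0 := (hXpos i).ne'
      field_simp
      ring
    rw [Finset.sum_congr rfl expand]
    have step : ∑ i, (C^2 * ((α i)^2 * v i) - 2*C*W*(α i * c i) + W^2 * ((c i)^2 / v i))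
        = C^2 * W - 2*C*W*C + W^2 * S := by
      rw [Finset.sum_add_distrib, Finset.sum_sub_distrib, ← Finset.mul_sum, ← Finset.mul_sum,
        ← Finset.mul_sum, ← hW, ← hC, ← hS]
    rw [step]
    nlinarith [hopt']
  have hterm : ∀ i, α i * v i * C - c i * W = 0 := by
    intro i
    have hz := (Finset.sum_eq_zero_iff_of_nonneg
      (fun i _ => mul_nonneg (one_div_nonneg.mpr (hXpos i).le) (sq_nonneg _))).mp
      key i (Finset.mem_univ i)
    have hvne : (1 : ℝ) / v i ≠ 0 := one_div_ne_zero (hXpos i).ne'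
    have := (mul_eq_zero.mp hz).resolve_left hvne
    exact pow_eq_zero_iff (n := 2) (by norm_num) |>.mp this
  refine ⟨-(W / C), neg_ne_zero.mpr (div_ne_zero hWpos.ne' hCne), fun i => ?_⟩
  have h := hterm i
  have hvne : v i ≠ 0 := (hXpos i).ne'
  rw [neg_neg]
  field_simp
  simp only [hv, hc] at h
  rw [eq_div_iff (hXpos i).ne']
  linear_combination h
end
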